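/- For all integers n ≥ 2 and k ≥ 0: the sequence of ratios (c(i,k) : ℝ)/(d(i,k) : ℝ) tends to S(n,k) as i → ∞, and (1 + S(n,k))²/S(n,k) = 2·(1 + L(n,k))²/L(n,k). -/
import Mathlib


/-- Pell numbers: P 0 = 0, P 1 = 1, P (m+2) = 2·P (m+1) + P m. -/
def pell : ℕ → ℕ
  | 0 => 0
  | 1 => 1
  | m + 2 => 2 * pell (m + 1) + pell m

/-- Half-companion Pell numbers: H 0 = 1, H 1 = 1, H (m+2) = 2·H (m+1) + H m. -/
def hpell : ℕ → ℕ
  | 0 => 1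
  | 1 => 1
  | m + 2 => 2 * hpell (m + 1) + hpell m

/-- The solution of x 0 = x0, x 1 = x1, x (i+2) = 2n·x (i+1) − x i. -/
def rec2 (n : ℕ) (x0 x1 : ℤ) : ℕ → ℤ
  | 0 => x0
  | 1 => x1
  | i + 2 => 2 * n * rec2 n x0 x1 (i + 1) - rec2 n x0 x1 i

/-- a i : a 0 = 1, a 1 = n. -/
def sa (n : ℕ) : ℕ → ℤ := rec2 n 1 n
/-- b i : b 0 = 0, b 1 = 1. -/
def sb (n : ℕ) : ℕ → ℤ := rec2 n 0 1
/-- c i : c 0 = 1, c 1 = 2n+1. -/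
def sc (n : ℕ) : ℕ → ℤ := rec2 n 1 (2 * n + 1)
/-- d i : d 0 = 1, d 1 = 1. -/
def sd (n : ℕ) : ℕ → ℤ := rec2 n 1 1

/-- X(i,k) = H(2k)·(a i + b i) + 2·P(2k)·n·(b i). -/
def XX (n i k : ℕ) : ℤ :=
  (hpell (2*k) : ℤ) * (sa n i + sb n i) + 2 * (pell (2*k) : ℤ) * n * sb n i

/-- Δ(i,k) = P(2k)·(a i + b i) + H(2k)·n·(b i). -/
def DD (n i k : ℕ) : ℤ :=
  (pell (2*k) : ℤ) * (sa n i + sb n i) + (hpell (2*k) : ℤ) * n * sb n i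

/-- a(i,k) = (X(i,k) + (a i − b i))/2. -/
def aik (n i k : ℕ) : ℤ := (XX n i k + (sa n i - sb n i)) / 2
/-- b(i,k) = (X(i,k) − (a i − b i))/2. -/
def bik (n i k : ℕ) : ℤ := (XX n i k - (sa n i - sb n i)) / 2
/-- c(i,k) = X(i,k) + Δ(i,k). -/
def cik (n i k : ℕ) : ℤ := XX n i k + DD n i k
/-- d(i,k) = X(i,k) − Δ(i,k). -/
def dik (n i k : ℕ) : ℤ := XX n i k - DD n i k

/-- √(n²−1). -/
noncomputable def sqn (n : ℕ) : ℝ := Real.sqrt ((n : ℝ)^2 - 1)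

/-- ω = n + √(n²−1). -/
noncomputable def om (n : ℕ) : ℝ := n + sqn n

/-- L(n,k) = (H(2k)·(√(n²−1)+1) + 2n·P(2k) + (√(n²−1)−1)) /
(H(2k)·(√(n²−1)+1) + 2n·P(2k) − (√(n²−1)−1)). -/
noncomputable def L (n k : ℕ) : ℝ :=
  ((hpell (2*k) : ℝ) * (sqn n + 1) + 2*n*(pell (2*k) : ℝ) + (sqn n - 1)) /
  ((hpell (2*k) : ℝ) * (sqn n + 1) + 2*n*(pell (2*k) : ℝ) - (sqn n - 1))

/-- S(n,0) = (√(n²−1)+1+n)/(√(n²−1)+1−n); for k ≥ 1,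
S(n,k) = ((√(n²−1)+1)·P(2k+1) + n·H(2k+1)) / ((√(n²−1)+1)·P(2k−1) + n·H(2k−1)). -/
noncomputable def S (n k : ℕ) : ℝ :=
  if k = 0 then (sqn n + 1 + n) / (sqn n + 1 - n)
  else ((sqn n + 1) * (pell (2*k+1) : ℝ) + n * (hpell (2*k+1) : ℝ)) /
       ((sqn n + 1) * (pell (2*k-1) : ℝ) + n * (hpell (2*k-1) : ℝ))


lemma pell_succ_add : ∀ m, pell (m+1) = pell m + hpell m ∧ hpell (m+1) = 2 * pell m + hpell m := by
  intro m
  induction m with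
  | zero => simp [pell, hpell]
  | succ m ih =>
    have hp : pell (m+1+1) = 2 * pell (m+1) + pell m := rfl
    have hh : hpell (m+1+1) = 2 * hpell (m+1) + hpell m := rfl
    omega

lemma hpell_pos (m : ℕ) : 1 ≤ hpell m := by
  induction m with
  | zero => simp [hpell]
  | succ m ih => have := (pell_succ_add m).2; omega

lemma hpell_sq (m : ℕ) : (hpell m : ℤ)^2 = 2 * (pell m : ℤ)^2 + (-1)^m := by
  induction m with
  | zero => simp [pell, hpell]
  | succ m ih =>
    have h1' : (pell (m+1) : ℤ) = pell m + hpell m := by exact_mod_cast (pell_succ_add m).1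
    have h2' : (hpell (m+1) : ℤ) = 2 * pell m + hpell m := by exact_mod_cast (pell_succ_add m).2
    rw [h1', h2', pow_succ]
    linear_combination (-1 : ℤ) * ih

lemma hpell_sq_even (k : ℕ) : ((hpell (2*k) : ℝ))^2 = 2 * ((pell (2*k) : ℝ))^2 + 1 := by
  have := hpell_sq (2*k)
  rw [pow_mul, neg_one_sq, one_pow] at this
  exact_mod_cast this

lemma sqn_sq {n : ℕ} (hn : 2 ≤ n) : sqn n ^ 2 = (n:ℝ)^2 - 1 := by
  have hn2 : (2:ℝ) ≤ n := by exact_mod_cast hn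
  exact Real.sq_sqrt (by nlinarith)

lemma sqn_facts {n : ℕ} (hn : 2 ≤ n) :
    1 < sqn n ∧ sqn n < n ∧ (n:ℝ) - 1 < sqn n := by
  have hn2 : (2:ℝ) ≤ n := by exact_mod_cast hn
  have h2 := sqn_sq hn
  have h0 : 0 ≤ sqn n := Real.sqrt_nonneg _
  refine ⟨by nlinarith, by nlinarith, by nlinarith⟩

lemma rec_closed (n : ℕ) (hn : 2 ≤ n) (f : ℕ → ℝ)
    (hf : ∀ i, f (i+2) = 2*(n:ℝ)*f (i+1) - f i) (i : ℕ) :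
    f i = ((f 1 - f 0 * ((n:ℝ) - sqn n)) / (2*sqn n)) * ((n:ℝ) + sqn n)^i
        + ((f 0 * ((n:ℝ) + sqn n) - f 1) / (2*sqn n)) * ((n:ℝ) - sqn n)^i := by
  have hn2 : (2:ℝ) ≤ n := by exact_mod_cast hn
  have hs2 := sqn_sq hn
  obtain ⟨hs1, hsn, hsn1⟩ := sqn_facts hn
  set s := sqn n with hs_def
  have hspos : (0:ℝ) < s := by linarith
  obtain ⟨A, hA⟩ : ∃ A, A = (f 1 - f 0 * ((n:ℝ) - s)) / (2*s) := ⟨_, rfl⟩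
  obtain ⟨B, hB⟩ : ∃ B, B = (f 0 * ((n:ℝ) + s) - f 1) / (2*s) := ⟨_, rfl⟩
  rw [← hA, ← hB]
  have hw : ((n:ℝ) + s)^2 = 2*(n:ℝ)*((n:ℝ)+s) - 1 := by linear_combination hs2
  have hw' : ((n:ℝ) - s)^2 = 2*(n:ℝ)*((n:ℝ)-s) - 1 := by linear_combination hs2
  have key : ∀ i, f i = A * ((n:ℝ)+s)^i + B * ((n:ℝ) - s)^i ∧
      f (i+1) = A * ((n:ℝ)+s)^(i+1) + B * ((n:ℝ) - s)^(i+1) := by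
    intro i
    induction i with
    | zero =>
      constructor
      · rw [hA, hB]; field_simp; ring
      · rw [hA, hB]; field_simp; ring
    | succ i ih =>
      refine ⟨ih.2, ?_⟩
      have h2 : f (i+2) = 2*(n:ℝ)*f (i+1) - f i := hf i
      rw [ih.1, ih.2] at h2
      rw [show i+1+1 = i+2 from rfl, h2]
      linear_combination (A * ((n:ℝ)+s)^i) * hw + (B * ((n:ℝ)-s)^i) * hw' - 2*(A*((n:ℝ)+s)^i + B*((n:ℝ)-s)^i) * hs2
  exact (key i).1

lemma rec_tendsto (n : ℕ) (hn : 2 ≤ n) (f : ℕ → ℝ)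
    (hf : ∀ i, f (i+2) = 2*(n:ℝ)*f (i+1) - f i) :
    Filter.Tendsto (fun i : ℕ => f i / ((n:ℝ) + sqn n)^i) Filter.atTop
      (nhds ((f 1 - f 0 * ((n:ℝ) - sqn n)) / (2*sqn n))) := by
  have hn2 : (2:ℝ) ≤ n := by exact_mod_cast hn
  obtain ⟨hs1, hsn, hsn1⟩ := sqn_facts hn
  set s := sqn n with hs_def
  obtain ⟨A, hA⟩ : ∃ A, A = (f 1 - f 0 * ((n:ℝ) - s)) / (2*s) := ⟨_, rfl⟩
  obtain ⟨B, hB⟩ : ∃ B, B = (f 0 * ((n:ℝ) + s) - f 1) / (2*s) := ⟨_, rfl⟩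
  rw [← hA]
  have hwpos : (0:ℝ) < (n:ℝ) + s := by linarith
  have hw'pos : (0:ℝ) < (n:ℝ) - s := by linarith
  set r := ((n:ℝ) - s) / ((n:ℝ) + s) with hr
  have hr0 : 0 ≤ r := by positivity
  have hr1 : r < 1 := by rw [hr, div_lt_one hwpos]; linarith
  have hlim : Filter.Tendsto (fun i : ℕ => A + B * r^i) Filter.atTop (nhds (A + B * 0)) :=
    Filter.Tendsto.const_add A (Filter.Tendsto.const_mul B
      (tendsto_pow_atTop_nhds_zero_of_lt_one hr0 hr1))
  rw [mul_zero, add_zero] at hlim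
  refine hlim.congr (fun i => ?_)
  have hc := rec_closed n hn f hf i
  rw [← hs_def] at hc
  rw [hc, hr, div_pow, ← hA, ← hB]
  have hwi : ((n:ℝ) + s)^i ≠ 0 := by positivity
  field_simp

lemma cik_rec (n k i : ℕ) : cik n (i+2) k = 2*(n:ℤ)*cik n (i+1) k - cik n i k := by
  simp only [cik, XX, DD, sa, sb]
  have h1 : rec2 n 1 n (i+2) = 2 * n * rec2 n 1 n (i+1) - rec2 n 1 n i := rfl
  have h2 : rec2 n 0 1 (i+2) = 2 * n * rec2 n 0 1 (i+1) - rec2 n 0 1 i := rfl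
  rw [h1, h2]; ring

lemma dik_rec (n k i : ℕ) : dik n (i+2) k = 2*(n:ℤ)*dik n (i+1) k - dik n i k := by
  simp only [dik, XX, DD, sa, sb]
  have h1 : rec2 n 1 n (i+2) = 2 * n * rec2 n 1 n (i+1) - rec2 n 1 n i := rfl
  have h2 : rec2 n 0 1 (i+2) = 2 * n * rec2 n 0 1 (i+1) - rec2 n 0 1 i := rfl
  rw [h1, h2]; ring

lemma cik_zero (n k : ℕ) : cik n 0 k = (hpell (2*k) : ℤ) + (pell (2*k) : ℤ) := by
  simp only [cik, XX, DD, sa, sb]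
  have h1 : rec2 n 1 n 0 = 1 := rfl
  have h2 : rec2 n 0 1 0 = 0 := rfl
  rw [h1, h2]; ring

lemma dik_zero (n k : ℕ) : dik n 0 k = (hpell (2*k) : ℤ) - (pell (2*k) : ℤ) := by
  simp only [dik, XX, DD, sa, sb]
  have h1 : rec2 n 1 n 0 = 1 := rfl
  have h2 : rec2 n 0 1 0 = 0 := rfl
  rw [h1, h2]; ring

lemma cik_one (n k : ℕ) : cik n 1 k
    = ((hpell (2*k) : ℤ) + (pell (2*k) : ℤ)) * (n+1) + (2*(pell (2*k) : ℤ) + (hpell (2*k) : ℤ)) * n := by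
  simp only [cik, XX, DD, sa, sb]
  have h1 : rec2 n 1 n 1 = (n : ℤ) := rfl
  have h2 : rec2 n 0 1 1 = 1 := rfl
  rw [h1, h2]; ring

lemma dik_one (n k : ℕ) : dik n 1 k
    = ((hpell (2*k) : ℤ) - (pell (2*k) : ℤ)) * (n+1) + (2*(pell (2*k) : ℤ) - (hpell (2*k) : ℤ)) * n := by
  simp only [dik, XX, DD, sa, sb]
  have h1 : rec2 n 1 n 1 = (n : ℤ) := rfl
  have h2 : rec2 n 0 1 1 = 1 := rfl
  rw [h1, h2]; ring

lemma S_eq (n k : ℕ) (hn : 2 ≤ n) :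
    S n k = ((1+sqn n)*((hpell (2*k):ℝ)+(pell (2*k):ℝ)) + (2*(pell (2*k):ℝ)+(hpell (2*k):ℝ))*n) /
            ((1+sqn n)*((hpell (2*k):ℝ)-(pell (2*k):ℝ)) + (2*(pell (2*k):ℝ)-(hpell (2*k):ℝ))*n) := by
  rcases k with _ | j
  · show (if (0:ℕ) = 0 then _ else _) = _
    rw [if_pos rfl]
    norm_num [pell, hpell]
    congr 1 <;> ring
  · have e1 : 2*(j+1)+1 = 2*j+3 := by ring
    have e2 : 2*(j+1)-1 = 2*j+1 := by omega
    have e3 : 2*(j+1) = 2*j+2 := by ring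
    have i1 : pell (2*j+3) = pell (2*j+2) + hpell (2*j+2) := (pell_succ_add (2*j+2)).1
    have i2 : hpell (2*j+3) = 2*pell (2*j+2) + hpell (2*j+2) := (pell_succ_add (2*j+2)).2
    have j1 : pell (2*j+2) = pell (2*j+1) + hpell (2*j+1) := (pell_succ_add (2*j+1)).1
    have j2 : hpell (2*j+2) = 2 * pell (2*j+1) + hpell (2*j+1) := (pell_succ_add (2*j+1)).2
    have i3 : pell (2*j+1) + pell (2*j+2) = hpell (2*j+2) := by omega
    have i4 : hpell (2*j+1) + hpell (2*j+2) = 2 * pell (2*j+2) := by omega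
    show (if j+1 = 0 then _ else _) = _
    rw [if_neg (Nat.succ_ne_zero j), e1, e2, e3]
    have i1' : (pell (2*j+3) : ℝ) = (pell (2*j+2) : ℝ) + (hpell (2*j+2) : ℝ) := by exact_mod_cast i1
    have i2' : (hpell (2*j+3) : ℝ) = 2*(pell (2*j+2) : ℝ) + (hpell (2*j+2) : ℝ) := by exact_mod_cast i2
    have i3' : (pell (2*j+1) : ℝ) + (pell (2*j+2) : ℝ) = (hpell (2*j+2) : ℝ) := by exact_mod_cast i3
    have i4' : (hpell (2*j+1) : ℝ) + (hpell (2*j+2) : ℝ) = 2*(pell (2*j+2) : ℝ) := by exact_mod_cast i4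
    congr 1
    · rw [i1', i2']; ring
    · linear_combination (sqn n + 1) * i3' + (n:ℝ) * i4'

theorem stmt_9 (n k : ℕ) (hn : 2 ≤ n) :
    Filter.Tendsto (fun i : ℕ => (cik n i k : ℝ) / (dik n i k : ℝ))
      Filter.atTop (nhds (S n k)) ∧
    (1 + S n k) ^ 2 / S n k = 2 * (1 + L n k) ^ 2 / L n k := by
  have hn2 : (2:ℝ) ≤ n := by exact_mod_cast hn
  have hs2 := sqn_sq hn
  obtain ⟨hs1, hsn, hsn1⟩ := sqn_facts hn
  have hHP := hpell_sq_even k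
  set s := sqn n with hs_def
  set P := (pell (2*k) : ℝ) with hP_def
  set H := (hpell (2*k) : ℝ) with hH_def
  have hP0 : 0 ≤ P := by rw [hP_def]; positivity
  have hH1 : 1 ≤ H := by rw [hH_def]; exact_mod_cast hpell_pos (2*k)
  obtain ⟨Nc, hNc_def⟩ : ∃ x, x = (1+s)*(H+P) + (2*P+H)*(n:ℝ) := ⟨_, rfl⟩
  obtain ⟨Nd, hNd_def⟩ : ∃ x, x = (1+s)*(H-P) + (2*P-H)*(n:ℝ) := ⟨_, rfl⟩
  have hNc : 0 < Nc := by
    rw [hNc_def]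
    nlinarith [mul_pos (show (0:ℝ) < 1+s by linarith) (show (0:ℝ) < H+P by linarith),
               mul_nonneg (show (0:ℝ) ≤ 2*P+H by linarith) (show (0:ℝ) ≤ (n:ℝ) by linarith)]
  have hNd : 0 < Nd := by
    rw [hNd_def]
    nlinarith [mul_pos (show (0:ℝ) < H by linarith) (show (0:ℝ) < 1+s-n by linarith),
               mul_nonneg hP0 (show (0:ℝ) ≤ 2*(n:ℝ)-1-s by linarith)]
  have hS : S n k = Nc / Nd := by
    rw [S_eq n k hn, hNc_def, hNd_def, ← hs_def, ← hP_def, ← hH_def]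
  have hspos : (0:ℝ) < s := by linarith
  constructor
  · -- the limit
    have hfrec : ∀ i, ((cik n (i+2) k : ℤ) : ℝ) = 2*(n:ℝ)*((cik n (i+1) k : ℤ) : ℝ) - ((cik n i k : ℤ) : ℝ) := by
      intro i; exact_mod_cast cik_rec n k i
    have hgrec : ∀ i, ((dik n (i+2) k : ℤ) : ℝ) = 2*(n:ℝ)*((dik n (i+1) k : ℤ) : ℝ) - ((dik n i k : ℤ) : ℝ) := by
      intro i; exact_mod_cast dik_rec n k i
    have hAc : ((cik n 1 k : ℝ) - (cik n 0 k : ℝ)*((n:ℝ)-s))/(2*s) = Nc/(2*s) := by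
      rw [hNc_def, hP_def, hH_def]
      push_cast [cik_one n k, cik_zero n k]
      ring
    have hAd : ((dik n 1 k : ℝ) - (dik n 0 k : ℝ)*((n:ℝ)-s))/(2*s) = Nd/(2*s) := by
      rw [hNd_def, hP_def, hH_def]
      push_cast [dik_one n k, dik_zero n k]
      ring
    have hc' : Filter.Tendsto (fun i : ℕ => (cik n i k : ℝ) / ((n:ℝ) + s)^i) Filter.atTop
        (nhds (Nc/(2*s))) := by
      have h := rec_tendsto n hn (fun i => (cik n i k : ℝ)) hfrec
      simp only [← hs_def] at h
      rwa [hAc] at h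
    have hd' : Filter.Tendsto (fun i : ℕ => (dik n i k : ℝ) / ((n:ℝ) + s)^i) Filter.atTop
        (nhds (Nd/(2*s))) := by
      have h := rec_tendsto n hn (fun i => (dik n i k : ℝ)) hgrec
      simp only [← hs_def] at h
      rwa [hAd] at h
    have hne : Nd/(2*s) ≠ 0 := by positivity
    have hlimit := hc'.div hd' hne
    have hval : (Nc/(2*s))/(Nd/(2*s)) = Nc/Nd := by
      rw [div_div_div_comm, div_self (by positivity : (2*s : ℝ) ≠ 0), div_one]
    rw [hval] at hlimit
    rw [hS]
    refine hlimit.congr fun i => ?_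
    have hwi : ((n:ℝ)+s)^i ≠ 0 := by positivity
    simp only [Pi.div_apply]
    rw [div_div_div_comm, div_self hwi, div_one]
  · -- the identity
    obtain ⟨M, hM_def⟩ : ∃ x, x = H*(s+1) + 2*(n:ℝ)*P := ⟨_, rfl⟩
    have hL : L n k = (M + (s-1)) / (M - (s-1)) := by
      unfold L
      rw [hM_def, ← hs_def, ← hP_def, ← hH_def]
    have hM : 0 < M := by
      rw [hM_def]
      nlinarith [mul_le_mul_of_nonneg_right hH1 (show (0:ℝ) ≤ s+1 by linarith),
                 mul_nonneg (show (0:ℝ) ≤ 2*(n:ℝ) by linarith) hP0]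
    have hLd : 0 < M - (s-1) := by
      rw [hM_def]
      nlinarith [mul_le_mul_of_nonneg_right hH1 (show (0:ℝ) ≤ s+1 by linarith),
                 mul_nonneg (show (0:ℝ) ≤ 2*(n:ℝ) by linarith) hP0]
    have hLc : 0 < M + (s-1) := by linarith
    have hkey : (M + (s-1))*(M - (s-1)) = 2*(Nc*Nd) := by
      rw [hM_def, hNc_def, hNd_def]
      linear_combination (2*(n:ℝ)^2 - (s+1)^2) * hHP - 2*hs2
    rw [hS, hL]
    have e1 : (1 + Nc/Nd)^2/(Nc/Nd) = (Nc+Nd)^2/(Nc*Nd) := by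
      field_simp
      ring
    have e2 : 2*(1 + (M+(s-1))/(M-(s-1)))^2/((M+(s-1))/(M-(s-1)))
        = 2*((M+(s-1))+(M-(s-1)))^2/((M+(s-1))*(M-(s-1))) := by
      field_simp
      ring
    rw [e1, e2, hkey]
    have hsum : (M+(s-1))+(M-(s-1)) = Nc+Nd := by rw [hM_def, hNc_def, hNd_def]; ring
    rw [hsum]
    rw [mul_div_mul_left _ _ (two_ne_zero)]
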